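/- Let 1 < p ≤ q < ∞, 0 < α < n, σ a weight, S a sparse collection of dyadic cubes contained in Q₀ with pairwise disjoint sets E_S ⊆ S satisfying |E_S| ≃ |S| (E_S = S minus its S-children), and suppose ϱ_σ^{α,p,q}(S) ≃ 2^r for all S ∈ S, where ϱ_σ^{α,p,q}(Q) = σ(Q)^{-q/p}∫_Q M_α(𝟙_Q σ)^{q/p}dx. Then ∑_{S∈S} (|S|^{α/n}⟨σ⟩_S)^{q/p}|S| ≲ 2^r σ(Q₀)^{q/p}. -/

import Mathlib

open MeasureTheory Set ENNReal

noncomputable section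

/-- An axis-parallel cube in `ℝⁿ`. -/
structure Cube (n : ℕ) where
  corner : Fin n → ℝ
  side : ℝ
  side_pos : 0 < side

namespace Cube

/-- The underlying (half-open) set of a cube. -/
def toSet {n : ℕ} (Q : Cube n) : Set (Fin n → ℝ) :=
  {x | ∀ i, Q.corner i ≤ x i ∧ x i < Q.corner i + Q.side}

/-- The volume `|Q| = side^n` of a cube. -/
def vol {n : ℕ} (Q : Cube n) : ℝ := Q.side ^ n

end Cube

/-- A dyadic grid: cubes of dyadic side lengths, nested or disjoint, partitioning `ℝⁿ`
at every scale. -/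
def IsDyadicGrid {n : ℕ} (D : Set (Cube n)) : Prop :=
  (∀ Q ∈ D, ∃ k : ℤ, Q.side = 2 ^ k) ∧
  (∀ Q ∈ D, ∀ R ∈ D, (Q.toSet ∩ R.toSet).Nonempty →
      Q.toSet ⊆ R.toSet ∨ R.toSet ⊆ Q.toSet) ∧
  (∀ k : ℤ, (⋃ Q ∈ {Q ∈ D | Q.side = 2 ^ k}, Q.toSet) = univ)

/-- The average `⟨f⟩_Q^μ = (1/μ(Q)) ∫_Q f dμ`. -/
def avg {n : ℕ} (μ : Measure (Fin n → ℝ)) (f : (Fin n → ℝ) → ℝ≥0∞) (Q : Cube n) : ℝ≥0∞ :=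
  (∫⁻ x in Q.toSet, f x ∂μ) / μ Q.toSet

/-- The Lebesgue average `⟨f⟩_Q = (1/|Q|) ∫_Q f`. -/
def lebAvg {n : ℕ} (f : (Fin n → ℝ) → ℝ≥0∞) (Q : Cube n) : ℝ≥0∞ :=
  (∫⁻ x in Q.toSet, f x) / ENNReal.ofReal Q.vol

/-- `σ(Q) = ∫_Q σ dx`. -/
def wt {n : ℕ} (σ : (Fin n → ℝ) → ℝ≥0∞) (Q : Cube n) : ℝ≥0∞ :=
  ∫⁻ x in Q.toSet, σ x

/-- The weighted average `⟨f⟩_Q^σ = (1/σ(Q)) ∫_Q f σ dx`. -/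
def avgw {n : ℕ} (σ f : (Fin n → ℝ) → ℝ≥0∞) (Q : Cube n) : ℝ≥0∞ :=
  (∫⁻ x in Q.toSet, f x * σ x) / wt σ Q

/-- The dyadic fractional maximal operator `M_α^D`. -/
def dyFracMax {n : ℕ} (D : Set (Cube n)) (α : ℝ) (f : (Fin n → ℝ) → ℝ≥0∞)
    (x : Fin n → ℝ) : ℝ≥0∞ :=
  ⨆ (Q : Cube n) (_ : Q ∈ D) (_ : x ∈ Q.toSet),
    ENNReal.ofReal (Q.vol ^ (α / (n : ℝ))) * lebAvg f Q

/-- The fractional maximal operator `M_α` (supremum over all cubes). -/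
def fracMax {n : ℕ} (α : ℝ) (f : (Fin n → ℝ) → ℝ≥0∞) (x : Fin n → ℝ) : ℝ≥0∞ :=
  ⨆ (Q : Cube n) (_ : x ∈ Q.toSet), ENNReal.ofReal (Q.vol ^ (α / (n : ℝ))) * lebAvg f Q

/-- The Hardy–Littlewood maximal operator (over all cubes). -/
def hlMax {n : ℕ} (f : (Fin n → ℝ) → ℝ≥0∞) (x : Fin n → ℝ) : ℝ≥0∞ :=
  ⨆ (Q : Cube n) (_ : x ∈ Q.toSet), lebAvg f Q

/-- The entropy functional `ρ_σ(Q) = (1/σ(Q)) ∫_Q M(σ 1_Q)`. -/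
def entropy {n : ℕ} (σ : (Fin n → ℝ) → ℝ≥0∞) (Q : Cube n) : ℝ≥0∞ :=
  (∫⁻ x in Q.toSet, hlMax (Q.toSet.indicator σ) x) / wt σ Q

/-- The fractional integral operator `I_α f (x) = ∫ f(y) |x-y|^{α-n} dy`. -/
def fracInt {n : ℕ} (α : ℝ) (f : (Fin n → ℝ) → ℝ≥0∞) (x : Fin n → ℝ) : ℝ≥0∞ :=
  ∫⁻ y, f y * ENNReal.ofReal (Real.sqrt (∑ i, (x i - y i) ^ 2) ^ (α - (n : ℝ)))

/-- `Q` is a maximal element of `S` strictly contained in `P`. -/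
def IsMaxChild {n : ℕ} (S : Set (Cube n)) (P Q : Cube n) : Prop :=
  Q ∈ S ∧ Q.toSet ⊂ P.toSet ∧
    ∀ R ∈ S, R.toSet ⊂ P.toSet → Q.toSet ⊆ R.toSet → R.toSet ⊆ Q.toSet

/-- A sparse collection of cubes: the maximal elements strictly inside any `P` in the
collection have total volume at most `|P|/2`. -/
def IsSparse {n : ℕ} (S : Set (Cube n)) : Prop :=
  ∀ P ∈ S, (∑' Q : {Q : Cube n // IsMaxChild S P Q}, ENNReal.ofReal Q.1.vol)
      ≤ ENNReal.ofReal P.vol / 2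

/-- `P` is the `S`-parent of `Q`: the minimal element of `S` containing `Q`. -/
def IsSParent {n : ℕ} (S : Set (Cube n)) (Q P : Cube n) : Prop :=
  P ∈ S ∧ Q.toSet ⊆ P.toSet ∧ ∀ R ∈ S, Q.toSet ⊆ R.toSet → P.toSet ⊆ R.toSet

/-- The separated-bump entropy functional
`ϱ_σ^{α,p,q}(Q) = σ(Q)^{-q/p} ∫_Q M_α(1_Q σ)^{q/p}`. -/
def sepRho {n : ℕ} (α p q : ℝ) (σ : (Fin n → ℝ) → ℝ≥0∞) (Q : Cube n) : ℝ≥0∞ :=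
  (∫⁻ x in Q.toSet, fracMax α (Q.toSet.indicator σ) x ^ (q / p)) / wt σ Q ^ (q / p)

/-- The separated entropy bump constant `[[σ,w]]_{α,p,q}` with bump function `ε`. -/
def sepBump {n : ℕ} (α p q : ℝ) (ε : ℝ → ℝ) (σ w : (Fin n → ℝ) → ℝ≥0∞) : ℝ≥0∞ :=
  ⨆ Q : Cube n,
    (ENNReal.ofReal (Q.vol ^ (α / (n : ℝ))) * lebAvg σ Q) ^ (q * (1 - 1 / p)) *
      lebAvg w Q * sepRho α p q σ Q * ENNReal.ofReal (ε (sepRho α p q σ Q).toReal)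

/-- The one-bump entropy quantity for the fractional maximal operator:
`β(Q) = |Q|^{α/n-1} σ(Q)^{1/p'} w(Q)^{1/q} ρ_σ(Q)^{1/p} ε_q(ρ_σ(Q))`. -/
def maxBump {n : ℕ} (α p q : ℝ) (εq : ℝ → ℝ) (σ w : (Fin n → ℝ) → ℝ≥0∞)
    (Q : Cube n) : ℝ≥0∞ :=
  ENNReal.ofReal (Q.vol ^ (α / (n : ℝ) - 1)) * wt σ Q ^ (1 - 1 / p) * wt w Q ^ (1 / q) *
    entropy σ Q ^ (1 / p) * ENNReal.ofReal (εq (entropy σ Q).toReal)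

/-- The one-bump entropy quantity for the fractional integral operator:
`β(Q) = |Q|^{α/n-1} σ(Q)^{1/p'} w(Q)^{1/q} ρ_σ(Q)^{1/p} ε_p(ρ_σ(Q)) ρ_w(Q)^{1/q'} ε_{q'}(ρ_w(Q))`. -/
def intBump {n : ℕ} (α p q : ℝ) (εp εq' : ℝ → ℝ) (σ w : (Fin n → ℝ) → ℝ≥0∞)
    (Q : Cube n) : ℝ≥0∞ :=
  ENNReal.ofReal (Q.vol ^ (α / (n : ℝ) - 1)) * wt σ Q ^ (1 - 1 / p) * wt w Q ^ (1 / q) *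
    entropy σ Q ^ (1 / p) * ENNReal.ofReal (εp (entropy σ Q).toReal) *
    entropy w Q ^ (1 - 1 / q) * ENNReal.ofReal (εq' (entropy w Q).toReal)

/-!
Each `P ∈ S` keeps half of its volume in `E_P`, the part of `P` outside its `S`-children, and
on `E_P` the function `M_α(𝟙_{P*} σ)`, for the maximal cube `P* ⊇ P` of `S`, is at least
`|P|^{α/n} ⟨σ⟩_P`. Hence each term of the sum is at most twice an integral over `E_P`. The sets
`E_P` with a common `P*` are disjoint subsets of `P*`, so these integrals add up to at most
`∫_{P*} M_α(𝟙_{P*} σ)^{q/p} = ϱ_σ(P*) σ(P*)^{q/p} ≤ 2^{r+1} σ(P*)^{q/p}`. Finally the maximal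
cubes are disjoint subsets of `Q₀` and `q/p ≥ 1`, so `∑ σ(P*)^{q/p} ≤ σ(Q₀)^{q/p}`.
-/

lemma ENNReal.tsum_rpow_le_rpow_tsum {ι : Type*} (f : ι → ℝ≥0∞) {s : ℝ} (hs : 1 ≤ s) :
    ∑' i, f i ^ s ≤ (∑' i, f i) ^ s := by
  have hsplit : ∀ x : ℝ≥0∞, x ^ s = x ^ (s - 1) * x := fun x => by
    conv_lhs => rw [← sub_add_cancel s 1, ENNReal.rpow_add_of_nonneg _ _ (by linarith) zero_le_one,
      ENNReal.rpow_one]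
  calc ∑' i, f i ^ s ≤ ∑' i, (∑' j, f j) ^ (s - 1) * f i := ENNReal.tsum_le_tsum fun i => by
        rw [hsplit]; gcongr
        exact ENNReal.le_tsum i
    _ = (∑' i, f i) ^ s := by rw [ENNReal.tsum_mul_left, ← hsplit]

lemma ENNReal.tsum_le_tsum_range_of_fiberwise_le {α β : Type*} (g : α → β) (f : α → ℝ≥0∞)
    (h : β → ℝ≥0∞) (hf : ∀ a, ∑' x : g ⁻¹' {g a}, f x ≤ h (g a)) :
    ∑' a, f a ≤ ∑' b : range g, h b := by
  rw [← ENNReal.tsum_fiberwise f g, tsum_subtype]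
  refine ENNReal.tsum_le_tsum fun b => ?_
  by_cases hb : b ∈ range g
  · obtain ⟨a, rfl⟩ := hb
    rw [indicator_of_mem (mem_range_self a)]
    exact hf a
  · have : IsEmpty (g ⁻¹' {b}) := ⟨fun x => hb ⟨x, x.2⟩⟩
    simp

lemma MeasureTheory.tsum_setLIntegral_le_of_pairwise_disjoint {α ι : Type*} [MeasurableSpace α]
    {μ : Measure α} [Countable ι] {A : ι → Set α} {B : Set α} (hA : ∀ i, MeasurableSet (A i))
    (hd : Pairwise (Function.onFun Disjoint A)) (hAB : ∀ i, A i ⊆ B) (f : α → ℝ≥0∞) :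
    ∑' i, ∫⁻ x in A i, f x ∂μ ≤ ∫⁻ x in B, f x ∂μ :=
  (lintegral_iUnion hA hd f).symm.trans_le (lintegral_mono_set (iUnion_subset hAB))

namespace Cube

variable {n : ℕ}

lemma toSet_eq_pi (Q : Cube n) :
    Q.toSet = univ.pi fun i => Ico (Q.corner i) (Q.corner i + Q.side) := by
  ext x; simp [Cube.toSet, Set.mem_pi, mem_Ico]

lemma corner_mem_toSet (Q : Cube n) : Q.corner ∈ Q.toSet :=
  fun _ => ⟨le_rfl, lt_add_of_pos_right _ Q.side_pos⟩

lemma exists_rat_mem_toSet (Q : Cube n) : ∃ v : Fin n → ℚ, (fun i => (v i : ℝ)) ∈ Q.toSet := by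
  choose v hv using fun i => exists_rat_btwn (lt_add_of_pos_right (Q.corner i) Q.side_pos)
  exact ⟨v, fun i => ⟨(hv i).1.le, (hv i).2⟩⟩

lemma measurableSet_toSet (Q : Cube n) : MeasurableSet Q.toSet := by
  rw [Q.toSet_eq_pi]
  exact .univ_pi fun _ => measurableSet_Ico

lemma volume_toSet (Q : Cube n) : volume Q.toSet = ENNReal.ofReal Q.vol := by
  rw [Q.toSet_eq_pi, volume_pi_pi]
  simp only [Real.volume_Ico, add_sub_cancel_left, Finset.prod_const, Finset.card_univ,
    Fintype.card_fin, Cube.vol, ENNReal.ofReal_pow Q.side_pos.le]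

lemma toSet_subset_iff {Q R : Cube n} : Q.toSet ⊆ R.toSet ↔
    ∀ i, R.corner i ≤ Q.corner i ∧ Q.corner i + Q.side ≤ R.corner i + R.side := by
  have hne : ¬∃ i, Ico (Q.corner i) (Q.corner i + Q.side) = ∅ := fun ⟨i, hi⟩ =>
    (nonempty_Ico.mpr (lt_add_of_pos_right (Q.corner i) Q.side_pos)).ne_empty hi
  rw [toSet_eq_pi, toSet_eq_pi, univ_pi_subset_univ_pi_iff, or_iff_left hne]
  exact forall_congr' fun i => Ico_subset_Ico_iff (lt_add_of_pos_right _ Q.side_pos)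

lemma side_le_of_toSet_subset (hn : n ≠ 0) {Q R : Cube n} (h : Q.toSet ⊆ R.toSet) :
    Q.side ≤ R.side := by
  have := toSet_subset_iff.mp h ⟨0, Nat.pos_of_ne_zero hn⟩
  linarith

lemma eq_of_toSet_subset_of_side_eq {Q R : Cube n} (h : Q.toSet ⊆ R.toSet)
    (hs : Q.side = R.side) : Q = R := by
  have hc : Q.corner = R.corner := funext fun i => by
    have := toSet_subset_iff.mp h i
    linarith
  cases Q; cases R
  simp_all

lemma toSet_injective (hn : n ≠ 0) : Function.Injective (toSet : Cube n → _) :=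
  fun _ _ h => eq_of_toSet_subset_of_side_eq h.le
    (le_antisymm (side_le_of_toSet_subset hn h.le) (side_le_of_toSet_subset hn h.ge))

end Cube

namespace IsDyadicGrid

variable {n : ℕ} {D : Set (Cube n)}

lemma eq_of_side_eq (hD : IsDyadicGrid D) {Q R : Cube n} (hQ : Q ∈ D) (hR : R ∈ D)
    (hQR : (Q.toSet ∩ R.toSet).Nonempty) (hs : Q.side = R.side) : Q = R := by
  rcases hD.2.1 Q hQ R hR hQR with h | h
  · exact Cube.eq_of_toSet_subset_of_side_eq h hs
  · exact (Cube.eq_of_toSet_subset_of_side_eq h hs.symm).symm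

lemma countable (hD : IsDyadicGrid D) : D.Countable := by
  choose k hk using hD.1
  choose v hv using fun Q : Cube n => Q.exists_rat_mem_toSet
  rw [← Set.countable_coe_iff]
  refine Function.Injective.countable (f := fun Q : D => (k Q Q.2, v Q)) fun Q R h => ?_
  simp only [Prod.mk.injEq] at h
  refine Subtype.ext (hD.eq_of_side_eq Q.2 R.2 ⟨_, hv Q, h.2 ▸ hv R⟩ ?_)
  rw [hk _ Q.2, hk _ R.2, h.1]

lemma finite_between (hn : n ≠ 0) (hD : IsDyadicGrid D) {P Q : Cube n} (hP : P ∈ D)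
    (hQ : Q ∈ D) : {R ∈ D | P.toSet ⊆ R.toSet ∧ R.toSet ⊆ Q.toSet}.Finite := by
  obtain ⟨kP, hkP⟩ := hD.1 P hP
  obtain ⟨kQ, hkQ⟩ := hD.1 Q hQ
  refine Finite.of_finite_image (f := Cube.side) (((Finset.Icc kP kQ).finite_toSet.image
    fun k : ℤ => (2 : ℝ) ^ k).subset ?_) fun R₁ h₁ R₂ h₂ hs =>
    hD.eq_of_side_eq h₁.1 h₂.1 ⟨P.corner, h₁.2.1 P.corner_mem_toSet,
      h₂.2.1 P.corner_mem_toSet⟩ hs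
  rintro _ ⟨R, ⟨hR, hPR, hRQ⟩, rfl⟩
  obtain ⟨k, hk⟩ := hD.1 R hR
  have hlow := Cube.side_le_of_toSet_subset hn hPR
  have hupp := Cube.side_le_of_toSet_subset hn hRQ
  rw [hkP, hk] at hlow
  rw [hkQ, hk] at hupp
  exact ⟨k, Finset.mem_Icc.mpr ⟨(zpow_le_zpow_iff_right₀ _root_.one_lt_two).mp hlow,
    (zpow_le_zpow_iff_right₀ _root_.one_lt_two).mp hupp⟩, hk.symm⟩

lemma exists_greatest_of_finite (hD : IsDyadicGrid D) {T : Set (Cube n)} (hTD : T ⊆ D)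
    (hT : T.Finite) {P : Cube n} (hP : P ∈ T) (hPT : ∀ R ∈ T, P.toSet ⊆ R.toSet) :
    ∃ M ∈ T, ∀ R ∈ T, R.toSet ⊆ M.toSet := by
  obtain ⟨M, hM, hMmax⟩ := hT.exists_maximalFor Cube.toSet T ⟨P, hP⟩
  refine ⟨M, hM, fun R hR => ?_⟩
  rcases hD.2.1 M (hTD hM) R (hTD hR)
    ⟨P.corner, hPT M hM P.corner_mem_toSet, hPT R hR P.corner_mem_toSet⟩ with h | h
  · exact hMmax hR h
  · exact h

end IsDyadicGrid

section StoppingCubes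

variable {n : ℕ} {D S : Set (Cube n)}

lemma exists_greatest_superset (hn : n ≠ 0) (hD : IsDyadicGrid D) (hSD : S ⊆ D)
    {Q₀ : Cube n} (hQ₀ : Q₀ ∈ D) (hSQ₀ : ∀ P ∈ S, P.toSet ⊆ Q₀.toSet) {P : Cube n}
    (hP : P ∈ S) :
    ∃ M ∈ S, P.toSet ⊆ M.toSet ∧ ∀ R ∈ S, P.toSet ⊆ R.toSet → R.toSet ⊆ M.toSet := by
  obtain ⟨M, ⟨hMS, hPM⟩, hM⟩ := hD.exists_greatest_of_finite (T := {R ∈ S | P.toSet ⊆ R.toSet})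
    (fun R hR => hSD hR.1)
    ((hD.finite_between hn (hSD hP) hQ₀).subset fun R hR => ⟨hSD hR.1, hR.2, hSQ₀ R hR.1⟩)
    ⟨hP, subset_rfl⟩ fun R hR => hR.2
  exact ⟨M, hMS, hPM, fun R hRS hPR => hM R ⟨hRS, hPR⟩⟩

lemma exists_isMaxChild (hn : n ≠ 0) (hD : IsDyadicGrid D) (hSD : S ⊆ D) {P R : Cube n}
    (hP : P ∈ S) (hR : R ∈ S) (hRP : R.toSet ⊂ P.toSet) :
    ∃ M, IsMaxChild S P M ∧ R.toSet ⊆ M.toSet := by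
  obtain ⟨M, ⟨hMS, hRM, hMP⟩, hM⟩ := hD.exists_greatest_of_finite
    (T := {R' ∈ S | R.toSet ⊆ R'.toSet ∧ R'.toSet ⊂ P.toSet}) (fun R' hR' => hSD hR'.1)
    ((hD.finite_between hn (hSD hR) (hSD hP)).subset
      fun R' hR' => ⟨hSD hR'.1, hR'.2.1, hR'.2.2.subset⟩)
    ⟨hR, subset_rfl, hRP⟩ fun R' hR' => hR'.2.1
  exact ⟨M, ⟨hMS, hMP, fun R' hR'S hR'P hMR' => hM R' ⟨hR'S, hRM.trans hMR', hR'P⟩⟩, hRM⟩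

/-- The paper's `E_P`: the part of `P` outside its `S`-children. -/
def stoppingSet (S : Set (Cube n)) (P : Cube n) : Set (Fin n → ℝ) :=
  P.toSet \ ⋃ R ∈ {R ∈ S | R.toSet ⊂ P.toSet}, R.toSet

lemma stoppingSet_subset (S : Set (Cube n)) (P : Cube n) : stoppingSet S P ⊆ P.toSet :=
  sdiff_subset

lemma measurableSet_stoppingSet (hS : S.Countable) (P : Cube n) :
    MeasurableSet (stoppingSet S P) :=
  P.measurableSet_toSet.diff
    (.biUnion (hS.mono (sep_subset _ _)) fun R _ => R.measurableSet_toSet)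

lemma disjoint_stoppingSet_of_ssubset {P R : Cube n} (hP : P ∈ S)
    (hPR : P.toSet ⊂ R.toSet) : Disjoint (stoppingSet S P) (stoppingSet S R) :=
  disjoint_left.mpr fun _ hxP hxR =>
    hxR.2 (mem_biUnion (x := P) ⟨hP, hPR⟩ (stoppingSet_subset S P hxP))

lemma disjoint_stoppingSet (hn : n ≠ 0) (hD : IsDyadicGrid D) (hSD : S ⊆ D) {P R : Cube n}
    (hP : P ∈ S) (hR : R ∈ S) (hne : P ≠ R) :
    Disjoint (stoppingSet S P) (stoppingSet S R) := by
  by_cases hPR : (P.toSet ∩ R.toSet).Nonempty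
  · have hne' : P.toSet ≠ R.toSet := (Cube.toSet_injective hn).ne hne
    rcases hD.2.1 P (hSD hP) R (hSD hR) hPR with h | h
    · exact disjoint_stoppingSet_of_ssubset hP (h.ssubset_of_ne hne')
    · exact (disjoint_stoppingSet_of_ssubset hR (h.ssubset_of_ne hne'.symm)).symm
  · exact (disjoint_iff_inter_eq_empty.mpr (not_nonempty_iff_eq_empty.mp hPR)).mono
      (stoppingSet_subset S P) (stoppingSet_subset S R)

lemma volume_le_two_mul_volume_stoppingSet (hn : n ≠ 0) (hD : IsDyadicGrid D) (hSD : S ⊆ D)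
    (hS : IsSparse S) {P : Cube n} (hP : P ∈ S) :
    ENNReal.ofReal P.vol ≤ 2 * volume (stoppingSet S P) := by
  have : Countable {Q // IsMaxChild S P Q} :=
    ((hD.countable.mono hSD).mono fun _ hQ => hQ.1 : {Q | IsMaxChild S P Q}.Countable).to_subtype
  have hchildren : volume (⋃ R ∈ {R ∈ S | R.toSet ⊂ P.toSet}, R.toSet) ≤
      ENNReal.ofReal P.vol / 2 := calc
    _ ≤ volume (⋃ Q : {Q // IsMaxChild S P Q}, Q.1.toSet) := measure_mono <| iUnion₂_subset
        fun R ⟨hR, hRP⟩ x hx => by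
          obtain ⟨M, hM, hRM⟩ := exists_isMaxChild hn hD hSD hP hR hRP
          exact mem_iUnion.mpr ⟨⟨M, hM⟩, hRM hx⟩
    _ ≤ ∑' Q : {Q // IsMaxChild S P Q}, volume Q.1.toSet := measure_iUnion_le _
    _ ≤ ENNReal.ofReal P.vol / 2 := by simpa only [Cube.volume_toSet] using hS P hP
  have hhalf : ENNReal.ofReal P.vol / 2 ≤ volume (stoppingSet S P) := calc
    ENNReal.ofReal P.vol / 2 = ENNReal.ofReal P.vol - ENNReal.ofReal P.vol / 2 :=
      (ENNReal.sub_half ofReal_ne_top).symm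
    _ ≤ volume P.toSet - volume (⋃ R ∈ {R ∈ S | R.toSet ⊂ P.toSet}, R.toSet) := by
      rw [Cube.volume_toSet]; gcongr
    _ ≤ volume (stoppingSet S P) := le_measure_sdiff
  calc ENNReal.ofReal P.vol = 2 * (ENNReal.ofReal P.vol / 2) :=
        (ENNReal.mul_div_cancel two_ne_zero ofNat_ne_top).symm
    _ ≤ 2 * volume (stoppingSet S P) := by gcongr

end StoppingCubes

section Packing

variable {n : ℕ}

def fracAvg (α : ℝ) (f : (Fin n → ℝ) → ℝ≥0∞) (P : Cube n) : ℝ≥0∞ :=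
  ENNReal.ofReal (P.vol ^ (α / (n : ℝ))) * lebAvg f P

lemma fracAvg_le_fracMax (α : ℝ) (f : (Fin n → ℝ) → ℝ≥0∞) {P : Cube n} {x : Fin n → ℝ}
    (hx : x ∈ P.toSet) : fracAvg α f P ≤ fracMax α f x :=
  le_iSup₂ (f := fun (Q : Cube n) (_ : x ∈ Q.toSet) =>
    ENNReal.ofReal (Q.vol ^ (α / (n : ℝ))) * lebAvg f Q) P hx

lemma fracAvg_indicator_of_subset (α : ℝ) (f : (Fin n → ℝ) → ℝ≥0∞) {P M : Cube n}
    (hPM : P.toSet ⊆ M.toSet) : fracAvg α (M.toSet.indicator f) P = fracAvg α f P := by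
  rw [fracAvg, fracAvg, lebAvg, lebAvg, lintegral_indicator M.measurableSet_toSet,
    Measure.restrict_restrict M.measurableSet_toSet, inter_eq_self_of_subset_right hPM]

variable {D S : Set (Cube n)} {α s : ℝ} {σ : (Fin n → ℝ) → ℝ≥0∞}

lemma fracAvg_rpow_mul_vol_le (hn : n ≠ 0) (hD : IsDyadicGrid D) (hSD : S ⊆ D)
    (hS : IsSparse S) {P M : Cube n} (hP : P ∈ S) (hPM : P.toSet ⊆ M.toSet) (hs : 0 ≤ s) :
    fracAvg α σ P ^ s * ENNReal.ofReal P.vol ≤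
      2 * ∫⁻ x in stoppingSet S P, fracMax α (M.toSet.indicator σ) x ^ s := calc
  _ ≤ fracAvg α σ P ^ s * (2 * volume (stoppingSet S P)) := by
      gcongr; exact volume_le_two_mul_volume_stoppingSet hn hD hSD hS hP
  _ = 2 * ∫⁻ _ in stoppingSet S P, fracAvg α σ P ^ s := by rw [setLIntegral_const]; ring
  _ ≤ _ := by
      gcongr 2 * ?_
      refine setLIntegral_mono' (measurableSet_stoppingSet (hD.countable.mono hSD) P)
        fun x hx => ENNReal.rpow_le_rpow ?_ hs
      rw [← fracAvg_indicator_of_subset α σ hPM]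
      exact fracAvg_le_fracMax α _ (stoppingSet_subset S P hx)

lemma tsum_setLIntegral_stoppingSet_le (hn : n ≠ 0) (hD : IsDyadicGrid D) (hSD : S ⊆ D)
    (t : S → Cube n) (ht : ∀ P : S, P.1.toSet ⊆ (t P).toSet)
    (F : Cube n → (Fin n → ℝ) → ℝ≥0∞) :
    ∑' P : S, ∫⁻ x in stoppingSet S P, F (t P) x ≤
      ∑' M : range t, ∫⁻ x in M.1.toSet, F M x := by
  have : Countable S := (hD.countable.mono hSD).to_subtype
  refine ENNReal.tsum_le_tsum_range_of_fiberwise_le t _ (fun M => ∫⁻ x in M.toSet, F M x)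
    fun P => ?_
  have hfiber (P' : t ⁻¹' {t P}) : t P' = t P := P'.2
  simp only [hfiber]
  refine MeasureTheory.tsum_setLIntegral_le_of_pairwise_disjoint
    (fun P' => measurableSet_stoppingSet (hD.countable.mono hSD) _)
    (fun P₁ P₂ hne => disjoint_stoppingSet hn hD hSD P₁.1.2 P₂.1.2
      fun h => hne (Subtype.ext (Subtype.ext h)))
    (fun P' => (stoppingSet_subset S _).trans
      ((ht P'.1).trans (congrArg Cube.toSet (hfiber P')).subset)) _

lemma tsum_wt_rpow_le {ι : Type*} [Countable ι] (σ : (Fin n → ℝ) → ℝ≥0∞) {Q : ι → Cube n}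
    {Q₀ : Cube n} (hd : Pairwise (Function.onFun Disjoint fun i => (Q i).toSet))
    (hQ : ∀ i, (Q i).toSet ⊆ Q₀.toSet) (hs : 1 ≤ s) :
    ∑' i, wt σ (Q i) ^ s ≤ wt σ Q₀ ^ s :=
  (ENNReal.tsum_rpow_le_rpow_tsum _ hs).trans <| ENNReal.rpow_le_rpow
    (MeasureTheory.tsum_setLIntegral_le_of_pairwise_disjoint
      (fun i => (Q i).measurableSet_toSet) hd hQ σ) (by linarith)

lemma tsum_fracAvg_rpow_mul_vol_le (hn : n ≠ 0) (hD : IsDyadicGrid D) (hSD : S ⊆ D)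
    (hS : IsSparse S) {Q₀ : Cube n} (hQ₀ : Q₀ ∈ D) (hSQ₀ : ∀ P ∈ S, P.toSet ⊆ Q₀.toSet)
    (hs : 1 ≤ s) {K : ℝ≥0∞}
    (hK : ∀ P ∈ S, ∫⁻ x in P.toSet, fracMax α (P.toSet.indicator σ) x ^ s ≤ K * wt σ P ^ s) :
    ∑' P : S, fracAvg α σ P ^ s * ENNReal.ofReal P.1.vol ≤ 2 * K * wt σ Q₀ ^ s := by
  have : Countable S := (hD.countable.mono hSD).to_subtype
  choose t htS hPt htmax using fun P : S => exists_greatest_superset hn hD hSD hQ₀ hSQ₀ P.2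
  have : Countable (range t) := (countable_range t).to_subtype
  have htop_eq {P₁ P₂ : S} (h : (t P₁).toSet ⊆ (t P₂).toSet) : t P₁ = t P₂ :=
    Cube.toSet_injective hn (h.antisymm (htmax P₁ _ (htS P₂) ((hPt P₁).trans h)))
  have htops : Pairwise (Function.onFun Disjoint fun M : range t => M.1.toSet) := by
    rintro ⟨_, P₁, rfl⟩ ⟨_, P₂, rfl⟩ hne
    by_contra hnd
    rcases hD.2.1 _ (hSD (htS P₁)) _ (hSD (htS P₂)) (not_disjoint_iff_nonempty_inter.mp hnd)
      with h | h
    · exact hne (Subtype.ext (htop_eq h))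
    · exact hne (Subtype.ext (htop_eq h).symm)
  calc ∑' P : S, fracAvg α σ P ^ s * ENNReal.ofReal P.1.vol
      ≤ ∑' P : S, 2 * ∫⁻ x in stoppingSet S P, fracMax α ((t P).toSet.indicator σ) x ^ s :=
        ENNReal.tsum_le_tsum fun P =>
          fracAvg_rpow_mul_vol_le hn hD hSD hS P.2 (hPt P) (by linarith)
    _ ≤ 2 * ∑' M : range t, ∫⁻ x in M.1.toSet, fracMax α (M.1.toSet.indicator σ) x ^ s := by
        rw [ENNReal.tsum_mul_left]
        gcongr 2 * ?_
        exact tsum_setLIntegral_stoppingSet_le hn hD hSD t hPt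
          fun M x => fracMax α (M.toSet.indicator σ) x ^ s
    _ ≤ 2 * ∑' M : range t, K * wt σ M.1 ^ s := by
        gcongr with M
        obtain ⟨P, hP⟩ := M.2
        exact hK _ (hP ▸ htS P)
    _ ≤ 2 * K * wt σ Q₀ ^ s := by
        rw [ENNReal.tsum_mul_left, mul_assoc]
        gcongr
        refine tsum_wt_rpow_le σ htops (fun M => ?_) hs
        obtain ⟨P, hP⟩ := M.2
        exact hP ▸ hSQ₀ _ (htS P)

end Packing

/-- the stopping-cube estimate
`∑_{S∈S} (|S|^{α/n}⟨σ⟩_S)^{q/p} |S| ≲ 2^r σ(Q₀)^{q/p}` when `ϱ_σ^{α,p,q}(S) ≃ 2^r`. -/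
theorem stmt18 (n : ℕ) (p q α : ℝ) (hp : 1 < p) (hpq : p ≤ q) (hα : 0 < α) (hαn : α < n) :
    ∃ C : ℝ≥0∞, C ≠ ∞ ∧
    ∀ (σ : (Fin n → ℝ) → ℝ≥0∞), Measurable σ →
    ∀ (D : Set (Cube n)), IsDyadicGrid D →
    ∀ Q₀ ∈ D, ∀ S : Set (Cube n), S ⊆ D → IsSparse S →
      (∀ P ∈ S, P.toSet ⊆ Q₀.toSet) →
    ∀ E : Cube n → Set (Fin n → ℝ), (∀ P, E P ⊆ P.toSet) →
      (∀ P R : Cube n, P ≠ R → Disjoint (E P) (E R)) →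
      (∀ P ∈ S, ENNReal.ofReal P.vol ≤ 2 * volume (E P)) →
    ∀ r : ℕ,
      (∀ P ∈ S, (2:ℝ≥0∞) ^ ((r:ℝ) - 1) ≤ sepRho α p q σ P ∧
        sepRho α p q σ P ≤ (2:ℝ≥0∞) ^ ((r:ℝ) + 1)) →
      (∑' P : S, (ENNReal.ofReal (P.1.vol ^ (α/(n:ℝ))) * lebAvg σ P.1) ^ (q/p) *
          ENNReal.ofReal P.1.vol)
        ≤ C * (2:ℝ≥0∞) ^ (r:ℝ) * wt σ Q₀ ^ (q/p) := by
  have hn : n ≠ 0 := by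
    rintro rfl
    simp only [CharP.cast_eq_zero] at hαn
    linarith
  have hs : 1 ≤ q / p := (one_le_div (by linarith)).mpr hpq
  refine ⟨4, by norm_num, fun σ _ D hD Q₀ hQ₀ S hSD hS hSQ₀ _ _ _ _ r hρ => ?_⟩
  have hK : ∀ P ∈ S, ∫⁻ x in P.toSet, fracMax α (P.toSet.indicator σ) x ^ (q / p) ≤
      2 ^ ((r : ℝ) + 1) * wt σ P ^ (q / p) := fun P hP =>
    (ENNReal.div_le_iff_le_mul
      (.inr (ENNReal.rpow_ne_top_of_nonneg (by positivity) ofNat_ne_top))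
      (.inr (by positivity))).mp (hρ P hP).2
  calc _ ≤ 2 * 2 ^ ((r : ℝ) + 1) * wt σ Q₀ ^ (q / p) :=
        tsum_fracAvg_rpow_mul_vol_le hn hD hSD hS hQ₀ hSQ₀ hs hK
    _ = 4 * 2 ^ (r : ℝ) * wt σ Q₀ ^ (q / p) := by
        rw [ENNReal.rpow_add _ _ two_ne_zero ofNat_ne_top, ENNReal.rpow_one]
        ring
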